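/- Let k ≥ 2 and let p : {0,1}^k → [0,∞) satisfy Σ_{z ∈ {0,1}^k} p(z) = 1. For y ∈ {0,1}^{k−1} set p(y) := p(y.0) + p(y.1) (where y.b denotes y with bit b appended), let q(y) ∈ [0,1] satisfy p(y) q(y) = p(y.0) and p(y)(1 − q(y)) = p(y.1), and let θ_y ∈ [0, π] satisfy cos(θ_y/2) = √(q(y)). For each y define the unitary C_y := |y⟩⟨y| ⊗ R_Y(θ_y) + (I_{2^{k−1}} − |y⟩⟨y|) ⊗ I_2 on ℂ^{2^{k−1}} ⊗ ℂ², where R_Y(θ) := [[cos(θ/2), −sin(θ/2)], [sin(θ/2), cos(θ/2)]]. Then the matrices {C_y} pairwise commute, and (∏_{y ∈ {0,1}^{k−1}} C_y)(Σ_{y ∈ {0,1}^{k−1}} √(p(y)) |y⟩ ⊗ |0⟩) = Σ_{y ∈ {0,1}^{k−1}} (√(p(y.0)) |y⟩ ⊗ |0⟩ + √(p(y.1)) |y⟩ ⊗ |1⟩) = Σ_{z ∈ {0,1}^k} √(p(z)) |z⟩. -/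

import Mathlib

/-!
Each gate `C_y` acts as `R_Y(θ_y)` on the two-dimensional block `|y⟩ ⊗ ℂ²` and as the
identity elsewhere. Gates with different controls act on disjoint blocks, so they commute
and their product acts blockwise; on the block of `y` the rotation sends `√(p(y)) |0⟩` to
`√(p(y)q(y)) |0⟩ + √(p(y)(1 − q(y))) |1⟩ = √(p(y.0)) |0⟩ + √(p(y.1)) |1⟩`.
-/

open Kronecker

/-- The rotation matrix `R_Y(θ) = [[cos(θ/2), −sin(θ/2)], [sin(θ/2), cos(θ/2)]]`. -/
noncomputable def RY (θ : ℝ) : Matrix (Fin 2) (Fin 2) ℂ :=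
  !![(Real.cos (θ / 2) : ℂ), -(Real.sin (θ / 2) : ℂ);
     (Real.sin (θ / 2) : ℂ), (Real.cos (θ / 2) : ℂ)]

/-- The controlled gate `C_y = |y⟩⟨y| ⊗ R_Y(θ_y) + (I − |y⟩⟨y|) ⊗ I₂` on
`ℂ^{2^{k−1}} ⊗ ℂ²`, the basis of `ℂ^{2^{k−1}}` being indexed by the bit strings
`y : Fin (k−1) → Fin 2`. -/
noncomputable def ctrlRY {K : ℕ} (θ : (Fin K → Fin 2) → ℝ) (y : Fin K → Fin 2) :
    Matrix ((Fin K → Fin 2) × Fin 2) ((Fin K → Fin 2) × Fin 2) ℂ :=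
  (Matrix.single y y (1 : ℂ)) ⊗ₖ RY (θ y) +
    ((1 : Matrix (Fin K → Fin 2) (Fin K → Fin 2) ℂ) - Matrix.single y y 1) ⊗ₖ
      (1 : Matrix (Fin 2) (Fin 2) ℂ)

namespace Matrix

variable {ι κ R : Type*} [Fintype ι] [DecidableEq ι] [Fintype κ] [DecidableEq κ] [CommRing R]

def controlledGate (y : ι) (U : Matrix κ κ R) : Matrix (ι × κ) (ι × κ) R :=
  single y y 1 ⊗ₖ U + (1 - single y y 1) ⊗ₖ 1

theorem controlledGate_mulVec (y : ι) (U : Matrix κ κ R) (v : ι × κ → R) :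
    controlledGate y U *ᵥ v =
      fun z => if z.1 = y then (U *ᵥ fun b => v (y, b)) z.2 else v z := by
  funext ⟨x, a⟩
  simp only [controlledGate, mulVec, dotProduct, Fintype.sum_prod_type, add_apply,
    kroneckerMap_apply, sub_apply, one_apply, single_apply]
  by_cases hx : x = y
  · subst hx
    simp
  · simp [hx, Ne.symm hx]

theorem controlledGate_commute {y y' : ι} (h : y ≠ y') (U V : Matrix κ κ R) :
    Commute (controlledGate y U) (controlledGate y' V) := by
  have hyy' : single y y (1 : R) * single y' y' 1 = 0 := single_mul_single_of_ne 1 y y y' h 1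
  have hy'y : single y' y' (1 : R) * single y y 1 = 0 :=
    single_mul_single_of_ne 1 y' y' y h.symm 1
  simp only [Commute, SemiconjBy, controlledGate, add_mul, mul_add, ← mul_kronecker_mul, sub_mul,
    mul_sub, one_mul, mul_one, hyy', hy'y, zero_kronecker, sub_zero, zero_add]
  rw [sub_right_comm 1 (single y y 1)]
  abel

theorem list_prod_controlledGate_mulVec (U : ι → Matrix κ κ R) {l : List ι} (hl : l.Nodup)
    (v : ι × κ → R) :
    (l.map fun y => controlledGate y (U y)).prod *ᵥ v =
      fun z => if z.1 ∈ l then (U z.1 *ᵥ fun b => v (z.1, b)) z.2 else v z := by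
  induction l with
  | nil => simp
  | cons y l ih =>
    obtain ⟨hyl, hl⟩ := List.nodup_cons.mp hl
    rw [List.map_cons, List.prod_cons, ← mulVec_mulVec, ih hl, controlledGate_mulVec]
    funext ⟨x, a⟩
    by_cases hx : x = y
    · subst hx
      simp [hyl]
    · simp [hx]

end Matrix

open Matrix

theorem sin_half_eq_sqrt_one_sub {θ q : ℝ} (hθ : θ ∈ Set.Icc 0 Real.pi) (hq : 0 ≤ q)
    (hcos : Real.cos (θ / 2) = Real.sqrt q) : Real.sin (θ / 2) = Real.sqrt (1 - q) := by
  have hsin_nonneg : 0 ≤ Real.sin (θ / 2) :=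
    Real.sin_nonneg_of_nonneg_of_le_pi (by linarith [hθ.1]) (by linarith [hθ.2, Real.pi_pos])
  rw [← Real.sqrt_sq hsin_nonneg, Real.sin_sq, hcos, Real.sq_sqrt hq]

theorem RY_mulVec_single_sqrt {p₀ p₁ q θ : ℝ} (hq : q ∈ Set.Icc 0 1)
    (hq0 : (p₀ + p₁) * q = p₀) (hq1 : (p₀ + p₁) * (1 - q) = p₁)
    (hθ : θ ∈ Set.Icc 0 Real.pi) (hcos : Real.cos (θ / 2) = Real.sqrt q) :
    RY θ *ᵥ Pi.single 0 (Real.sqrt (p₀ + p₁) : ℂ) =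
      ![(Real.sqrt p₀ : ℂ), Real.sqrt p₁] := by
  have hsin := sin_half_eq_sqrt_one_sub hθ hq.1 hcos
  have hp₀ : Real.cos (θ / 2) * Real.sqrt (p₀ + p₁) = Real.sqrt p₀ := by
    rw [hcos, ← Real.sqrt_mul hq.1, mul_comm, hq0]
  have hp₁ : Real.sin (θ / 2) * Real.sqrt (p₀ + p₁) = Real.sqrt p₁ := by
    rw [hsin, ← Real.sqrt_mul (sub_nonneg.mpr hq.2), mul_comm, hq1]
  rw [mulVec_single]
  ext b
  fin_cases b <;>
    simp [RY, ← Complex.ofReal_mul, hp₀, hp₁, -Complex.ofReal_cos, -Complex.ofReal_sin]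

theorem generator_inductive_step_general (k : ℕ)
    (p : ((Fin (k - 1) → Fin 2) × Fin 2) → ℝ)
    (q θ : (Fin (k - 1) → Fin 2) → ℝ)
    (hq : ∀ y, q y ∈ Set.Icc (0 : ℝ) 1)
    (hq0 : ∀ y, (p (y, 0) + p (y, 1)) * q y = p (y, 0))
    (hq1 : ∀ y, (p (y, 0) + p (y, 1)) * (1 - q y) = p (y, 1))
    (hθ : ∀ y, θ y ∈ Set.Icc (0 : ℝ) Real.pi)
    (hcos : ∀ y, Real.cos (θ y / 2) = Real.sqrt (q y)) :
    (∀ y y', Commute (ctrlRY θ y) (ctrlRY θ y')) ∧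
      ∀ l : List (Fin (k - 1) → Fin 2), l.Nodup → (∀ y, y ∈ l) →
        ((l.map (ctrlRY θ)).prod).mulVec
            (fun z => if z.2 = 0 then ((Real.sqrt (p (z.1, 0) + p (z.1, 1)) : ℝ) : ℂ) else 0)
          = fun z => ((Real.sqrt (p z) : ℝ) : ℂ) := by
  refine ⟨fun y y' => ?_, fun l hl hl_univ => ?_⟩
  · rcases eq_or_ne y y' with rfl | hne
    · exact Commute.refl _
    · exact controlledGate_commute hne _ _
  have hgates : l.map (ctrlRY θ) = l.map fun y => controlledGate y (RY (θ y)) := rfl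
  rw [hgates, list_prod_controlledGate_mulVec _ hl]
  funext ⟨y, b⟩
  simp only [hl_univ, if_true]
  have hinput : (fun b : Fin 2 => if b = 0 then ((Real.sqrt (p (y, 0) + p (y, 1)) : ℝ) : ℂ)
      else 0) = Pi.single 0 (Real.sqrt (p (y, 0) + p (y, 1)) : ℂ) := by
    funext b
    simp only [Pi.single_apply]
  rw [hinput, RY_mulVec_single_sqrt (hq y) (hq0 y) (hq1 y) (hθ y) (hcos y)]
  fin_cases b <;> rfl

/-- inductive step of the quantum generator.  Identifying `{0,1}^k` with
`{0,1}^{k−1} × {0,1}` (`z = y.b`) and `ℂ^{2^k}` with `ℂ^{2^{k−1}} ⊗ ℂ²`: given a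
probability distribution `p` on `{0,1}^k`, marginals `p(y) = p(y.0) + p(y.1)`,
conditional probabilities `q(y) ∈ [0,1]` with `p(y)q(y) = p(y.0)` and
`p(y)(1 − q(y)) = p(y.1)`, and angles `θ_y ∈ [0,π]` with `cos(θ_y/2) = √(q(y))`, the
gates `C_y` pairwise commute and their product (in any order: `l` enumerates
`{0,1}^{k−1}` in an arbitrary order) maps `Σ_y √(p(y))|y⟩⊗|0⟩` to
`Σ_y (√(p(y.0))|y⟩⊗|0⟩ + √(p(y.1))|y⟩⊗|1⟩) = Σ_z √(p(z))|z⟩`. -/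
theorem generator_inductive_step (k : ℕ) (hk : 2 ≤ k)
    (p : ((Fin (k - 1) → Fin 2) × Fin 2) → ℝ)
    (hp : ∀ z, 0 ≤ p z) (hpsum : ∑ z : (Fin (k - 1) → Fin 2) × Fin 2, p z = 1)
    (q θ : (Fin (k - 1) → Fin 2) → ℝ)
    (hq : ∀ y, q y ∈ Set.Icc (0 : ℝ) 1)
    (hq0 : ∀ y, (p (y, 0) + p (y, 1)) * q y = p (y, 0))
    (hq1 : ∀ y, (p (y, 0) + p (y, 1)) * (1 - q y) = p (y, 1))
    (hθ : ∀ y, θ y ∈ Set.Icc (0 : ℝ) Real.pi)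
    (hcos : ∀ y, Real.cos (θ y / 2) = Real.sqrt (q y)) :
    (∀ y y', Commute (ctrlRY θ y) (ctrlRY θ y')) ∧
      ∀ l : List (Fin (k - 1) → Fin 2), l.Nodup → (∀ y, y ∈ l) →
        ((l.map (ctrlRY θ)).prod).mulVec
            (fun z => if z.2 = 0 then ((Real.sqrt (p (z.1, 0) + p (z.1, 1)) : ℝ) : ℂ) else 0)
          = fun z => ((Real.sqrt (p z) : ℝ) : ℂ) :=
  generator_inductive_step_general k p q θ hq hq0 hq1 hθ hcos
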